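/- For any p, q ∈ [0,1], the inequalities (√(pq) − √((1−p)(1−q)))² ≤ |p + q − 1| and 1 − |p − q| ≤ (√(pq) + √((1−p)(1−q)))² hold. -/

import Mathlib

/-! Write `a = √(pq)` and `b = √((1-p)(1-q))`, so that `a² - b² = p + q - 1`.
The lower bound is `(a - b)² ≤ |a - b| (a + b) = |a² - b²|`. For the upper bound, put
`x = p(1-q)` and `y = q(1-p)`: then `ab = √(xy)`, `x - y = p - q` and `a² + b² + x + y = 1`,
so `1 - |p - q| = a² + b² + 2 min x y ≤ a² + b² + 2ab`. -/

theorem sq_sub_le_abs_sq_sub_sq {α : Type*} [CommRing α] [LinearOrder α] [IsStrictOrderedRing α]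
    {a b : α} (ha : 0 ≤ a) (hb : 0 ≤ b) : (a - b) ^ 2 ≤ |a ^ 2 - b ^ 2| := by
  have hab : |a - b| ≤ a + b := abs_sub_le_iff.mpr ⟨by linarith, by linarith⟩
  calc (a - b) ^ 2 = |a - b| * |a - b| := by rw [← sq_abs, sq]
    _ ≤ |a - b| * (a + b) := mul_le_mul_of_nonneg_left hab (abs_nonneg _)
    _ = |a ^ 2 - b ^ 2| := by
      rw [sq_sub_sq, abs_mul, abs_of_nonneg (add_nonneg ha hb), mul_comm]

theorem Real.min_le_sqrt_mul (x y : ℝ) : min x y ≤ √(x * y) := by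
  rcases lt_or_ge (min x y) 0 with hneg | hnonneg
  · exact hneg.le.trans (Real.sqrt_nonneg _)
  · have hx : 0 ≤ x := hnonneg.trans (min_le_left x y)
    apply Real.le_sqrt_of_sq_le
    rw [sq]
    exact mul_le_mul (min_le_left x y) (min_le_right x y) hnonneg hx

theorem two_nsmul_min_eq_add_sub_abs {α : Type*} [AddCommGroup α] [LinearOrder α]
    [IsOrderedAddMonoid α] (x y : α) : 2 • min x y = x + y - |x - y| := by
  rw [← max_sub_min_eq_abs', ← min_add_max x y, two_nsmul]
  abel

theorem stmt_8 (p q : ℝ) (hp : p ∈ Set.Icc (0:ℝ) 1) (hq : q ∈ Set.Icc (0:ℝ) 1) :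
    (Real.sqrt (p * q) - Real.sqrt ((1 - p) * (1 - q))) ^ 2 ≤ |p + q - 1| ∧
    1 - |p - q| ≤ (Real.sqrt (p * q) + Real.sqrt ((1 - p) * (1 - q))) ^ 2 := by
  obtain ⟨hp0, hp1⟩ := hp
  obtain ⟨hq0, hq1⟩ := hq
  have ha : √(p * q) ^ 2 = p * q := Real.sq_sqrt (by positivity)
  have hb : √((1 - p) * (1 - q)) ^ 2 = (1 - p) * (1 - q) :=
    Real.sq_sqrt (mul_nonneg (by linarith) (by linarith))
  constructor
  · calc (√(p * q) - √((1 - p) * (1 - q))) ^ 2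
        ≤ |√(p * q) ^ 2 - √((1 - p) * (1 - q)) ^ 2| :=
          sq_sub_le_abs_sq_sub_sq (Real.sqrt_nonneg _) (Real.sqrt_nonneg _)
      _ = |p + q - 1| := by rw [ha, hb]; congr 1; ring
  · have hab : √(p * q) * √((1 - p) * (1 - q)) = √((p * (1 - q)) * (q * (1 - p))) := by
      rw [← Real.sqrt_mul (by positivity)]
      ring_nf
    have hmin := two_nsmul_min_eq_add_sub_abs (p * (1 - q)) (q * (1 - p))
    have hgm := Real.min_le_sqrt_mul (p * (1 - q)) (q * (1 - p))
    have hdiff : p * (1 - q) - q * (1 - p) = p - q := by ring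
    rw [hdiff, two_nsmul] at hmin
    rw [add_sq, ha, hb, mul_assoc, hab]
    linarith
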